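/- arXiv:2306.05334 — 2 statements merged into one kernel-verified Lean document; each statement's English description precedes it below -/
import Mathlib

section
/- For every positive integer n, the 2×n grid graph has twin-width 2 if and only if n >= 4; moreover the 2×n grid has twin-width at most 2 for every n >= 2. -/
/-!
Upper bound: contracting the vertices of the `m × n` grid one at a time, column by column, into a
single growing part keeps every red degree at most `m`. A singleton is red only towards the big
part, and a vertex outside the big part can be red towards it only if it has a neighbour in it;
such vertices lie among the next `m` in the column-major order, which has bandwidth `m`.

Lower bound: restricting every partition of a contraction sequence to an induced subgraph gives a
contraction sequence of it (a merge involving a part that misses the subgraph changes nothing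
there), so twin-width is monotone under induced subgraphs. The `2 × 4` grid is an induced
subgraph of the `2 × n` grid for `n ≥ 4`, and an exhaustive search through the partitions
reachable with red degree at most `1` shows that it has no `1`-contraction sequence; the same
search finds one for the `2 × n` grid when `n ≤ 3`.
-/

namespace TwwPaper

open Finset

/-! ### Twin-width via contraction (partition-merge) sequences -/

/-- Two parts `P`, `Q` are *pure* (homogeneous) in `G`: the graph is either complete or empty
between them.  In the trigraph of a partition, a non-pure pair of parts is joined by a red edge. -/
def Pure {V : Type*} (G : SimpleGraph V) (P Q : Finset V) : Prop :=
  (∀ x ∈ P, ∀ y ∈ Q, G.Adj x y) ∨ (∀ x ∈ P, ∀ y ∈ Q, ¬ G.Adj x y)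

/-- The red degree of a part `P` in the partition `PP`: the number of other parts that are
not pure with respect to `P`. -/
noncomputable def redDeg {V : Type*} (G : SimpleGraph V) (PP : Finset (Finset V)) (P : Finset V) : ℕ :=
  {Q | Q ∈ PP ∧ Q ≠ P ∧ ¬ Pure G P Q}.ncard

/-- `QQ` is obtained from `PP` by merging (contracting) two parts. -/
def Merge {V : Type*} [DecidableEq V] (PP QQ : Finset (Finset V)) : Prop :=
  ∃ A ∈ PP, ∃ B ∈ PP, A ≠ B ∧ QQ = insert (A ∪ B) ((PP.erase A).erase B)

/-- One contraction step keeping every red degree at most `d`. -/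
def Step {V : Type*} [DecidableEq V] (G : SimpleGraph V) (d : ℕ) (PP QQ : Finset (Finset V)) :
    Prop :=
  Merge PP QQ ∧ ∀ P ∈ QQ, redDeg G QQ P ≤ d

/-- `G` admits a `d`-contraction sequence: starting from the partition into singletons one can
merge two parts at a time, always keeping all red degrees at most `d`, until one part remains. -/
def TwwLE {V : Type*} [Fintype V] [DecidableEq V] (G : SimpleGraph V) (d : ℕ) : Prop :=
  Relation.ReflTransGen (Step G d)
    (Finset.univ.image fun v => ({v} : Finset V)) {Finset.univ}

/-- The twin-width of a finite simple graph. -/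
noncomputable def tww {V : Type*} [Fintype V] [DecidableEq V] (G : SimpleGraph V) : ℕ :=
  sInf {d | TwwLE G d}

/-! ### Minors, separators, subgraph containment -/

/-- `H` is a minor of `G`: there is a minor model, i.e. pairwise disjoint nonempty connected
branch sets, one for each vertex of `H`, with an edge of `G` between the branch sets of any two
adjacent vertices of `H`. -/
def IsMinor {α β : Type*} (H : SimpleGraph α) (G : SimpleGraph β) : Prop :=
  ∃ f : α → Set β,
    (∀ a, (f a).Nonempty) ∧
    (∀ a, (G.induce (f a)).Connected) ∧
    (∀ a b, a ≠ b → Disjoint (f a) (f b)) ∧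
    ∀ a b, H.Adj a b → ∃ x ∈ f a, ∃ y ∈ f b, G.Adj x y

/-- `S` is a separator of `G` : deleting `S` leaves a nonempty disconnected graph. -/
def Sep {α : Type*} (G : SimpleGraph α) (S : Set α) : Prop :=
  (Sᶜ : Set α).Nonempty ∧ ¬ (G.induce Sᶜ).Preconnected

/-- `G` contains `F` as a (not necessarily induced) subgraph. -/
def ContainsSubgraph {α β : Type*} (G : SimpleGraph β) (F : SimpleGraph α) : Prop :=
  ∃ f : α → β, Function.Injective f ∧ ∀ a b, F.Adj a b → G.Adj (f a) (f b)

/-- `G` is internally 4-connected. -/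
def Internally4Connected {α : Type*} [Fintype α] (G : SimpleGraph α) : Prop :=
  5 ≤ Fintype.card α ∧
  (∀ S : Set α, S.ncard < 3 → ¬ Sep G S) ∧
  ∀ S : Set α, S.ncard = 3 → Sep G S →
    (∀ a ∈ S, ∀ b ∈ S, ¬ G.Adj a b) ∧ ∃ v ∉ S, G.neighborSet v = S

/-! ### The concrete graphs -/

/-- `K₆` minus one edge. -/
def K6minus : SimpleGraph (Fin 6) where
  Adj a b := a ≠ b ∧ ¬(({a, b} : Finset (Fin 6)) = {0, 1})
  symm := by
    constructor
    rintro a b ⟨h1, h2⟩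
    exact ⟨h1.symm, by rwa [Finset.pair_comm]⟩
  loopless := ⟨fun a h => h.1 rfl⟩

/-- The complement of the 7-cycle. -/
def C7c : SimpleGraph (Fin 7) := (SimpleGraph.cycleGraph 7)ᶜ

/-- Join of two graphs. -/
def joinG {α β : Type*} (G : SimpleGraph α) (H : SimpleGraph β) : SimpleGraph (α ⊕ β) where
  Adj x y :=
    match x, y with
    | Sum.inl a, Sum.inl b => G.Adj a b
    | Sum.inr a, Sum.inr b => H.Adj a b
    | _, _ => True
  symm := by
    constructor
    rintro (a | a) (b | b) h
    · exact G.symm.symm _ _ h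
    · exact trivial
    · exact trivial
    · exact H.symm.symm _ _ h
  loopless := by
    constructor
    rintro (a | a) h
    · exact G.loopless.irrefl a h
    · exact H.loopless.irrefl a h

/-- The join of `C₅` with the complement of `K₂` (two isolated vertices). -/
def C5K2c : SimpleGraph (Fin 5 ⊕ Fin 2) :=
  joinG (SimpleGraph.cycleGraph 5) (⊥ : SimpleGraph (Fin 2))

/-- The part of a vertex of `K_{3,1,3}`: `{0,1,2}`, `{3}`, `{4,5,6}`. -/
def triPart : Fin 7 → ℕ := fun a => if a.val < 3 then 0 else if a.val = 3 then 1 else 2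

/-- `K_{3,1̂,3}`: the complete tripartite graph `K_{3,1,3}` minus one edge from the middle
vertex `3` to each of the two size-3 parts (the edges `{0,3}` and `{3,4}`). -/
def K313hat : SimpleGraph (Fin 7) where
  Adj a b := triPart a ≠ triPart b ∧ ¬(({a, b} : Finset (Fin 7)) = {0, 3}) ∧
    ¬(({a, b} : Finset (Fin 7)) = {3, 4})
  symm := by
    constructor
    rintro a b ⟨h1, h2, h3⟩
    refine ⟨h1.symm, ?_, ?_⟩ <;> rwa [Finset.pair_comm]
  loopless := ⟨fun a h => h.1 rfl⟩

/-- The cube graph `Q₃`. -/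
def Q3 : SimpleGraph (Fin 2 × Fin 2 × Fin 2) where
  Adj x y := (x.1 ≠ y.1 ∧ x.2 = y.2) ∨ (x.1 = y.1 ∧ x.2.1 ≠ y.2.1 ∧ x.2.2 = y.2.2) ∨
    (x.1 = y.1 ∧ x.2.1 = y.2.1 ∧ x.2.2 ≠ y.2.2)
  symm := by
    constructor
    rintro x y (⟨h1, h2⟩ | ⟨h1, h2, h3⟩ | ⟨h1, h2, h3⟩)
    · exact Or.inl ⟨h1.symm, h2.symm⟩
    · exact Or.inr (Or.inl ⟨h1.symm, h2.symm, h3.symm⟩)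
    · exact Or.inr (Or.inr ⟨h1.symm, h2.symm, h3.symm⟩)
  loopless := by
    constructor
    rintro x (⟨h, -⟩ | ⟨-, h, -⟩ | ⟨-, -, h⟩) <;> exact h rfl

/-- The Wagner graph `V₈`: the 8-cycle plus the four main diagonals. -/
def V8 : SimpleGraph (Fin 8) where
  Adj a b := a ≠ b ∧ (b = a + 1 ∨ a = b + 1 ∨ b = a + 4)
  symm := by
    constructor
    rintro a b ⟨h, h1 | h1 | h1⟩
    · exact ⟨h.symm, Or.inr (Or.inl h1)⟩
    · exact ⟨h.symm, Or.inl h1⟩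
    · refine ⟨h.symm, Or.inr (Or.inr ?_)⟩
      subst h1
      have h4 : (4 : Fin 8) + 4 = 0 := by decide
      rw [add_assoc, h4, add_zero]
  loopless := by constructor; rintro a ⟨h, -⟩; exact h rfl

/-- `K₆` minus a perfect matching (`K₆^≡`), i.e. the octahedron `K_{2,2,2}`. -/
def K6mm3 : SimpleGraph (Fin 6) where
  Adj a b := a.val % 3 ≠ b.val % 3
  symm := ⟨fun _ _ h => h.symm⟩
  loopless := ⟨fun _ h => h rfl⟩

/-- `K₆` minus a matching of size two (`K₆^=`). -/
def K6mm2 : SimpleGraph (Fin 6) where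
  Adj a b := a ≠ b ∧ ¬(({a, b} : Finset (Fin 6)) = {0, 3}) ∧
    ¬(({a, b} : Finset (Fin 6)) = {1, 4})
  symm := by
    constructor
    rintro a b ⟨h1, h2, h3⟩
    refine ⟨h1.symm, ?_, ?_⟩ <;> rwa [Finset.pair_comm]
  loopless := ⟨fun a h => h.1 rfl⟩

/-- The join of the complement of `C₆` with a single vertex. -/
def C6cK1 : SimpleGraph (Fin 6 ⊕ Fin 1) :=
  joinG ((SimpleGraph.cycleGraph 6)ᶜ) (⊥ : SimpleGraph (Fin 1))

/-- A perfect matching graph on `Fin m` (`m` even): `2i` is matched to `2i+1`. -/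
def matchingGraph (m : ℕ) : SimpleGraph (Fin m) where
  Adj a b := a ≠ b ∧ a.val / 2 = b.val / 2
  symm := ⟨fun _ _ h => ⟨h.1.symm, h.2.symm⟩⟩
  loopless := ⟨fun _ h => h.1 rfl⟩

/-- The `m × n` grid graph. -/
def gridGraph (m n : ℕ) : SimpleGraph (Fin m × Fin n) where
  Adj p q := (p.1 = q.1 ∧ (p.2.val + 1 = q.2.val ∨ q.2.val + 1 = p.2.val)) ∨
    (p.2 = q.2 ∧ (p.1.val + 1 = q.1.val ∨ q.1.val + 1 = p.1.val))
  symm := by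
    constructor
    rintro p q (⟨h1, h2⟩ | ⟨h1, h2⟩)
    · exact Or.inl ⟨h1.symm, h2.symm⟩
    · exact Or.inr ⟨h1.symm, h2.symm⟩
  loopless := by constructor; rintro p (⟨-, h | h⟩ | ⟨-, h | h⟩) <;> omega

/-! ### `(Δ,Y)`-operation -/

/-- The `(Δ,Y)`-operation on the triangle `{x,y,z}` of `G`: delete the edges of the triangle
and add a new vertex (`none`) adjacent exactly to `x`, `y`, `z`. -/
def deltaY {α : Type*} (G : SimpleGraph α) (x y z : α) : SimpleGraph (Option α) where
  Adj a b :=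
    match a, b with
    | some a, some b => G.Adj a b ∧ ¬((a = x ∨ a = y ∨ a = z) ∧ (b = x ∨ b = y ∨ b = z))
    | some a, none => a = x ∨ a = y ∨ a = z
    | none, some b => b = x ∨ b = y ∨ b = z
    | none, none => False
  symm := by
    constructor
    rintro (_ | a) (_ | b) h
    · exact h.elim
    · exact h
    · exact h
    · exact ⟨h.1.symm, fun hc => h.2 ⟨hc.2, hc.1⟩⟩
  loopless := by
    constructor
    rintro (_ | a) h
    · exact h
    · exact G.loopless.irrefl a h.1

/-- `G` has a spanning subgraph isomorphic to a member of
`𝓕₃ = {K₆⁻, C₇ᶜ, C₅ + K₂ᶜ, K_{3,1̂,3}, Q₃, V₈}`. -/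
def HasSpanningF3 {α : Type*} (G : SimpleGraph α) : Prop :=
  ∃ H : SimpleGraph α, H ≤ G ∧
    (Nonempty (H ≃g K6minus) ∨ Nonempty (H ≃g C7c) ∨ Nonempty (H ≃g C5K2c) ∨
      Nonempty (H ≃g K313hat) ∨ Nonempty (H ≃g Q3) ∨ Nonempty (H ≃g V8))

/-- `G` has a minor in `𝓕₃`. -/
def HasF3Minor {α : Type*} (G : SimpleGraph α) : Prop :=
  IsMinor K6minus G ∨ IsMinor C7c G ∨ IsMinor C5K2c G ∨ IsMinor K313hat G ∨
    IsMinor Q3 G ∨ IsMinor V8 G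

/-! ### Subdivisions -/

/-- Vertices of the subdivision of `G` in which the edge `ab` (with `a < b`) receives
`ℓ a b` internal (subdivision) vertices: the original vertices plus, for each oriented edge,
`ℓ a b` new vertices. -/
def SubdivVert {α : Type*} [LT α] (G : SimpleGraph α) (ℓ : α → α → ℕ) : Type _ :=
  α ⊕ Σ e : {p : α × α // p.1 < p.2 ∧ G.Adj p.1 p.2}, Fin (ℓ e.1.1 e.1.2)

noncomputable instance SubdivVert.instFintype {α : Type*} [LT α] [Fintype α]
    (G : SimpleGraph α) (ℓ : α → α → ℕ) : Fintype (SubdivVert G ℓ) := by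
  classical
  unfold SubdivVert
  infer_instance

noncomputable instance SubdivVert.instDecidableEq {α : Type*} [LT α] [DecidableEq α]
    (G : SimpleGraph α) (ℓ : α → α → ℕ) : DecidableEq (SubdivVert G ℓ) := by
  classical
  unfold SubdivVert
  infer_instance

/-- The subdivision of `G` in which each edge `ab` (`a < b`) is replaced by a path with
`ℓ a b` internal vertices (so of length `ℓ a b + 1`); an edge with `ℓ a b = 0` stays an edge. -/
def Subdiv {α : Type*} [LT α] (G : SimpleGraph α) (ℓ : α → α → ℕ) :
    SimpleGraph (SubdivVert G ℓ) where
  Adj x y :=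
    match x, y with
    | Sum.inl a, Sum.inl b =>
        G.Adj a b ∧ ((a < b ∧ ℓ a b = 0) ∨ (b < a ∧ ℓ b a = 0))
    | Sum.inl a, Sum.inr ei =>
        (a = ei.1.1.1 ∧ (ei.2 : ℕ) = 0) ∨ (a = ei.1.1.2 ∧ (ei.2 : ℕ) + 1 = ℓ ei.1.1.1 ei.1.1.2)
    | Sum.inr ei, Sum.inl a =>
        (a = ei.1.1.1 ∧ (ei.2 : ℕ) = 0) ∨ (a = ei.1.1.2 ∧ (ei.2 : ℕ) + 1 = ℓ ei.1.1.1 ei.1.1.2)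
    | Sum.inr ei, Sum.inr ej =>
        ei.1 = ej.1 ∧ ((ei.2 : ℕ) + 1 = (ej.2 : ℕ) ∨ (ej.2 : ℕ) + 1 = (ei.2 : ℕ))
  symm := by
    constructor
    rintro (a | ei) (b | ej) h
    · exact ⟨h.1.symm, h.2.symm⟩
    · exact h
    · exact h
    · exact ⟨h.1.symm, h.2.symm⟩
  loopless := by
    constructor
    rintro (a | ei) h
    · exact G.loopless.irrefl a h.1
    · rcases h.2 with h' | h' <;> omega

/-- Lexicographic order on the vertex set of a grid, used to orient its edges. -/
def lexLT {m n : ℕ} : LT (Fin m × Fin n) :=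
  ⟨fun p q => p.1 < q.1 ∨ (p.1 = q.1 ∧ p.2 < q.2)⟩

section Partitions
variable {V : Type*} [DecidableEq V] (G : SimpleGraph V)

instance [DecidableRel G.Adj] : DecidableRel (Pure G) := fun P Q =>
  inferInstanceAs (Decidable ((∀ x ∈ P, ∀ y ∈ Q, G.Adj x y) ∨ (∀ x ∈ P, ∀ y ∈ Q, ¬ G.Adj x y)))

omit [DecidableEq V] in
lemma pure_singleton_singleton (x y : V) : Pure G {x} {y} := by
  by_cases h : G.Adj x y
  · exact Or.inl (by simpa using h)
  · exact Or.inr (by simpa using h)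

lemma redDeg_eq_card [DecidableRel G.Adj] (PP : Finset (Finset V)) (P : Finset V) :
    redDeg G PP P = #{Q ∈ PP | Q ≠ P ∧ ¬ Pure G P Q} := by
  rw [redDeg, ← Set.ncard_coe_finset]
  congr 1
  ext Q
  simp

omit [DecidableEq V] in
lemma redDeg_le_card_of_subset {PP : Finset (Finset V)} {P : Finset V} (T : Finset (Finset V))
    (hT : ∀ Q ∈ PP, Q ≠ P → ¬ Pure G P Q → Q ∈ T) : redDeg G PP P ≤ #T := by
  rw [redDeg, ← Set.ncard_coe_finset]
  exact Set.ncard_le_ncard fun Q ⟨hQ, hne, hnp⟩ => hT Q hQ hne hnp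

def RedDegLE (d : ℕ) (QQ : Finset (Finset V)) : Prop := ∀ P ∈ QQ, redDeg G QQ P ≤ d

instance [DecidableRel G.Adj] (d : ℕ) : DecidablePred (RedDegLE G d) := fun QQ =>
  decidable_of_iff (∀ P ∈ QQ, #{Q ∈ QQ | Q ≠ P ∧ ¬ Pure G P Q} ≤ d) <| by
    simp only [RedDegLE, redDeg_eq_card]

lemma pairwiseDisjoint_singletons [Fintype V] :
    ((univ.image fun v => ({v} : Finset V)) : Set (Finset V)).PairwiseDisjoint id := by
  rintro _ hx _ hy hxy
  obtain ⟨x, -, rfl⟩ := mem_image.1 hx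
  obtain ⟨y, -, rfl⟩ := mem_image.1 hy
  exact disjoint_singleton.2 fun h => hxy (h ▸ rfl)

lemma Merge.pairwiseDisjoint {PP QQ : Finset (Finset V)} (hM : Merge PP QQ)
    (hPP : (PP : Set (Finset V)).PairwiseDisjoint id) :
    (QQ : Set (Finset V)).PairwiseDisjoint id := by
  obtain ⟨A, hA, B, hB, hAB, rfl⟩ := hM
  rw [coe_insert]
  refine (hPP.subset ?_).insert fun C hC hne => disjoint_union_left.2 ⟨?_, ?_⟩
  · exact (coe_subset.2 ((erase_subset _ _).trans (erase_subset _ _)))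
  all_goals
    obtain ⟨hCB, hC⟩ := mem_erase.1 hC
    obtain ⟨hCA, hC⟩ := mem_erase.1 hC
  · exact hPP hA hC (Ne.symm hCA)
  · exact hPP hB hC (Ne.symm hCB)

end Partitions

section TwinWidth
variable {V : Type*} [Fintype V] [DecidableEq V] {G : SimpleGraph V}

lemma tww_le_of_twwLE {d : ℕ} (h : TwwLE G d) : tww G ≤ d := Nat.sInf_le h

lemma TwwLE.mono {d d' : ℕ} (h : TwwLE G d) (hd : d ≤ d') : TwwLE G d' :=
  Relation.ReflTransGen.mono (fun _ _ hs => ⟨hs.1, fun P hP => (hs.2 P hP).trans hd⟩) _ _ h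

lemma tww_eq_of_twwLE_of_not_twwLE {d : ℕ} (h : TwwLE G (d + 1)) (hn : ¬ TwwLE G d) :
    tww G = d + 1 := by
  refine le_antisymm (tww_le_of_twwLE h) (Nat.succ_le_of_lt ?_)
  by_contra! hle
  exact hn (TwwLE.mono (Nat.sInf_mem (s := {d | TwwLE G d}) ⟨d + 1, h⟩) hle)

end TwinWidth

section InitialSegment
variable {V : Type*} [Fintype V] {N : ℕ} (e : V ≃ Fin N)

def initialSegment (k : ℕ) : Finset V := {v | (e v : ℕ) < k}

lemma mem_initialSegment {k : ℕ} {v : V} : v ∈ initialSegment e k ↔ (e v : ℕ) < k := by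
  simp [initialSegment]

lemma initialSegment_one (hN : 0 < N) : initialSegment e 1 = {e.symm ⟨0, hN⟩} := by
  ext v
  rw [mem_initialSegment, mem_singleton, Equiv.eq_symm_apply, Fin.ext_iff, Nat.lt_one_iff]

lemma initialSegment_succ [DecidableEq V] {k : ℕ} (hk : k < N) :
    initialSegment e (k + 1) = insert (e.symm ⟨k, hk⟩) (initialSegment e k) := by
  ext v
  simp only [mem_insert, mem_initialSegment, Equiv.eq_symm_apply, Fin.ext_iff]
  omega

lemma symm_notMem_initialSegment {k : ℕ} (hk : k < N) : e.symm ⟨k, hk⟩ ∉ initialSegment e k := by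
  simp [mem_initialSegment]

lemma initialSegment_nonempty {k : ℕ} (hN : 0 < N) (hk : 1 ≤ k) :
    (initialSegment e k).Nonempty :=
  ⟨e.symm ⟨0, hN⟩, by simp only [mem_initialSegment, Equiv.apply_symm_apply]; omega⟩

lemma initialSegment_self : initialSegment e N = univ := by
  ext v
  simp [mem_initialSegment]

end InitialSegment

section Sweep
variable {V : Type*} [Fintype V] [DecidableEq V] (G : SimpleGraph V)

def sweepPartition (S : Finset V) : Finset (Finset V) :=
  insert S ((univ \ S).image fun v => {v})

lemma sweepPartition_singleton (v : V) :
    sweepPartition {v} = univ.image fun w => ({w} : Finset V) := by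
  rw [sweepPartition, ← image_insert, insert_eq, union_sdiff_of_subset (subset_univ _)]

lemma sweepPartition_univ : sweepPartition (univ : Finset V) = {univ} := by
  simp [sweepPartition]

lemma notMem_image_singleton_univ_sdiff {S : Finset V} (hS : S.Nonempty) :
    S ∉ (univ \ S).image fun w => ({w} : Finset V) := by
  rintro h
  obtain ⟨w, hw, rfl⟩ := mem_image.1 h
  exact (mem_sdiff.1 hw).2 (mem_singleton_self w)

lemma merge_sweepPartition {S : Finset V} {v : V} (hS : S.Nonempty) (hv : v ∉ S) :
    Merge (sweepPartition S) (sweepPartition (insert v S)) := by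
  have hSv : S ≠ {v} := fun h => hv (h ▸ mem_singleton_self v)
  refine ⟨S, mem_insert_self _ _, {v}, mem_insert_of_mem (mem_image_of_mem _ ?_), hSv, ?_⟩
  · simpa using hv
  rw [sweepPartition, sweepPartition, erase_insert (notMem_image_singleton_univ_sdiff hS),
    ← image_erase singleton_injective, ← sdiff_insert, union_singleton]

lemma redDegLE_sweepPartition [DecidableRel G.Adj] {S : Finset V} {d : ℕ} (hd : 1 ≤ d)
    (hS : #{w ∈ univ \ S | ¬ Pure G S {w}} ≤ d) : RedDegLE G d (sweepPartition S) := by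
  intro P hP
  rcases mem_insert.1 hP with rfl | hP
  · refine (redDeg_le_card_of_subset G (({w ∈ univ \ P | ¬ Pure G P {w}}).image fun w => {w})
      ?_).trans (card_image_le.trans hS)
    intro Q hQ hne hnp
    rcases mem_insert.1 hQ with rfl | hQ
    · exact absurd rfl hne
    obtain ⟨w, hw, rfl⟩ := mem_image.1 hQ
    exact mem_image_of_mem _ (mem_filter.2 ⟨hw, hnp⟩)
  · obtain ⟨v, -, rfl⟩ := mem_image.1 hP
    refine (redDeg_le_card_of_subset G {S} ?_).trans (card_singleton S ▸ hd)
    intro Q hQ _ hnp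
    rcases mem_insert.1 hQ with rfl | hQ
    · exact mem_singleton_self Q
    obtain ⟨w, -, rfl⟩ := mem_image.1 hQ
    exact absurd (pure_singleton_singleton G v w) hnp

theorem twwLE_of_sweep [DecidableRel G.Adj] {N d : ℕ} (e : V ≃ Fin N) (hN : 0 < N) (hd : 1 ≤ d)
    (h : ∀ k, #{w ∈ univ \ initialSegment e k | ¬ Pure G (initialSegment e k) {w}} ≤ d) :
    TwwLE G d := by
  have hstep : ∀ k, 1 ≤ k → (hk : k < N) → Step G d (sweepPartition (initialSegment e k))
      (sweepPartition (initialSegment e (k + 1))) := by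
    intro k hk1 hk
    refine ⟨?_, redDegLE_sweepPartition G hd (h _)⟩
    rw [initialSegment_succ e hk]
    exact merge_sweepPartition (initialSegment_nonempty e hN hk1)
      (symm_notMem_initialSegment e hk)
  have hchain : ∀ k, 1 ≤ k → k ≤ N → Relation.ReflTransGen (Step G d)
      (sweepPartition (initialSegment e 1)) (sweepPartition (initialSegment e k)) := by
    intro k hk1
    induction k, hk1 using Nat.le_induction with
    | base => exact fun _ => .refl
    | succ k hk1 ih => exact fun hk => (ih (by omega)).tail (hstep k hk1 hk)
  rw [TwwLE, ← sweepPartition_singleton (e.symm ⟨0, hN⟩), ← initialSegment_one e hN,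
    ← sweepPartition_univ, ← initialSegment_self e]
  exact hchain N hN le_rfl

theorem twwLE_of_bandwidth {N d : ℕ} (e : V ≃ Fin N) (hN : 0 < N) (hd : 1 ≤ d)
    (hadj : ∀ u v, G.Adj u v → (e v : ℕ) ≤ e u + d) : TwwLE G d := by
  classical
  refine twwLE_of_sweep G e hN hd fun k => ?_
  calc #{w ∈ univ \ initialSegment e k | ¬ Pure G (initialSegment e k) {w}}
      ≤ #(Ico k (k + d)) := card_le_card_of_injOn (fun w => (e w : ℕ)) (fun w hw => ?_)
        fun _ _ _ _ h => e.injective (Fin.ext h)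
    _ = d := by simp
  obtain ⟨hw, hnp⟩ := mem_filter.1 hw
  have hwk : k ≤ e w := by simpa [mem_initialSegment] using hw
  obtain ⟨x, hx, hxw⟩ : ∃ x ∈ initialSegment e k, G.Adj x w := by
    by_contra! h
    exact hnp (Or.inr fun x hx y hy => mem_singleton.1 hy ▸ h x hx)
  have hxw' := hadj x w hxw
  have hxk := (mem_initialSegment e).1 hx
  simp only [coe_Ico, Set.mem_Ico]
  omega

end Sweep

section Embedding
variable {α β : Type*} [Fintype α] [DecidableEq α] [DecidableEq β]

def comapPart (f : α → β) (P : Finset β) : Finset α := {x | f x ∈ P}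

omit [DecidableEq α] in
lemma mem_comapPart {f : α → β} {P : Finset β} {x : α} : x ∈ comapPart f P ↔ f x ∈ P := by
  simp [comapPart]

lemma comapPart_union (f : α → β) (A B : Finset β) :
    comapPart f (A ∪ B) = comapPart f A ∪ comapPart f B := by
  ext x
  simp [mem_comapPart]

omit [DecidableEq α] in
lemma comapPart_ne_of_disjoint {f : α → β} {C D : Finset β} (h : Disjoint C D)
    (hC : comapPart f C ≠ ∅) : comapPart f C ≠ comapPart f D := by
  obtain ⟨x, hx⟩ := nonempty_iff_ne_empty.2 hC
  intro hCD
  exact disjoint_left.1 h (mem_comapPart.1 hx) (mem_comapPart.1 (hCD ▸ hx))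

def comapPartition (f : α → β) (PP : Finset (Finset β)) : Finset (Finset α) :=
  (PP.image (comapPart f)).erase ∅

lemma mem_comapPartition {f : α → β} {PP : Finset (Finset β)} {X : Finset α} :
    X ∈ comapPartition f PP ↔ X ≠ ∅ ∧ ∃ P ∈ PP, comapPart f P = X := by
  simp [comapPartition]

lemma comapPart_notMem_comapPartition (f : α → β) {PP rest : Finset (Finset β)}
    (hPP : (PP : Set (Finset β)).PairwiseDisjoint id) (hrest : rest ⊆ PP) {D : Finset β}
    (hD : D ∈ PP) (hDr : D ∉ rest) : comapPart f D ∉ comapPartition f rest := by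
  intro hDX
  obtain ⟨hne, C, hC, hCD⟩ := mem_comapPartition.1 hDX
  exact comapPart_ne_of_disjoint (C := C) (hPP (hrest hC) hD fun h => hDr (h ▸ hC))
    (by rwa [hCD]) hCD

lemma Merge.comap (f : α → β) {PP QQ : Finset (Finset β)} (hM : Merge PP QQ)
    (hPP : (PP : Set (Finset β)).PairwiseDisjoint id) :
    comapPartition f QQ = comapPartition f PP ∨
      Merge (comapPartition f PP) (comapPartition f QQ) := by
  obtain ⟨A, hA, B, hB, hAB, rfl⟩ := hM
  set rest := (PP.erase A).erase B
  have hrest : rest ⊆ PP := (erase_subset _ _).trans (erase_subset _ _)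
  have hArest : A ∉ rest := fun h => (mem_erase.1 (mem_of_mem_erase h)).1 rfl
  have hBrest : B ∉ rest := fun h => (mem_erase.1 h).1 rfl
  have hPP_eq : PP = insert A (insert B rest) := by
    rw [insert_erase (mem_erase.2 ⟨hAB.symm, hB⟩), insert_erase hA]
  have hcomap : comapPartition f PP =
      (insert (comapPart f A) (insert (comapPart f B) (rest.image (comapPart f)))).erase ∅ := by
    rw [comapPartition, hPP_eq, image_insert, image_insert]
  rw [comapPartition, image_insert, comapPart_union, hcomap]
  by_cases hA0 : comapPart f A = ∅
  · left
    rw [hA0, empty_union, erase_insert_eq_erase]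
  by_cases hB0 : comapPart f B = ∅
  · left
    rw [hB0, union_empty, insert_comm, erase_insert_eq_erase]
  right
  have hAB' : comapPart f A ≠ comapPart f B := comapPart_ne_of_disjoint (C := A) (hPP hA hB hAB) hA0
  refine ⟨comapPart f A, mem_erase.2 ⟨hA0, mem_insert_self _ _⟩, comapPart f B,
    mem_erase.2 ⟨hB0, mem_insert_of_mem (mem_insert_self _ _)⟩, hAB', ?_⟩
  rw [erase_insert_of_ne hA0, erase_insert_of_ne hB0, erase_insert_of_ne, erase_insert,
    erase_insert]
  · exact comapPart_notMem_comapPartition f hPP hrest hB hBrest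
  · rw [mem_insert, not_or]
    exact ⟨hAB', comapPart_notMem_comapPartition f hPP hrest hA hArest⟩
  · rw [Ne, union_eq_empty, not_and]
    exact fun h => absurd h hA0

variable {G : SimpleGraph β} {H : SimpleGraph α} (e : H ↪g G)
include e

omit [DecidableEq α] in
lemma Pure.comap {P Q : Finset β} (h : Pure G P Q) : Pure H (comapPart e P) (comapPart e Q) := by
  rcases h with h | h
  · exact Or.inl fun x hx y hy => e.map_adj_iff.1 (h _ (mem_comapPart.1 hx) _ (mem_comapPart.1 hy))
  · exact Or.inr fun x hx y hy hxy =>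
      h _ (mem_comapPart.1 hx) _ (mem_comapPart.1 hy) (e.map_adj_iff.2 hxy)

lemma redDeg_comapPartition_le (PP : Finset (Finset β)) (P : Finset β) :
    redDeg H (comapPartition e PP) (comapPart e P) ≤ redDeg G PP P := by
  have hfin : {Q | Q ∈ PP ∧ Q ≠ P ∧ ¬ Pure G P Q}.Finite :=
    PP.finite_toSet.subset fun Q hQ => hQ.1
  refine (Set.ncard_le_ncard ?_ (hfin.image (comapPart e))).trans (Set.ncard_image_le hfin)
  rintro X ⟨hX, hne, hnp⟩
  obtain ⟨-, Q, hQ, rfl⟩ := mem_comapPartition.1 hX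
  exact ⟨Q, ⟨hQ, fun h => hne (h ▸ rfl), fun h => hnp (h.comap e)⟩, rfl⟩

lemma Step.comap {d : ℕ} {PP QQ : Finset (Finset β)} (hS : Step G d PP QQ)
    (hPP : (PP : Set (Finset β)).PairwiseDisjoint id) :
    Relation.ReflTransGen (Step H d) (comapPartition e PP) (comapPartition e QQ) := by
  rcases hS.1.comap e hPP with h | h
  · rw [h]
  · refine .single ⟨h, fun X hX => ?_⟩
    obtain ⟨-, Q, hQ, rfl⟩ := mem_comapPartition.1 hX
    exact (redDeg_comapPartition_le e QQ Q).trans (hS.2 Q hQ)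

omit [DecidableEq α] in
lemma comapPart_singleton_apply (x : α) : comapPart e {e x} = {x} := by
  ext y
  simp [mem_comapPart]

lemma comapPartition_singletons [Fintype β] :
    comapPartition e (univ.image fun v => ({v} : Finset β)) =
      univ.image fun x => ({x} : Finset α) := by
  ext X
  simp only [mem_comapPartition, mem_image, mem_univ, true_and, exists_exists_eq_and]
  constructor
  · rintro ⟨hX, v, rfl⟩
    obtain ⟨x, hx⟩ := nonempty_iff_ne_empty.2 hX
    rw [← mem_comapPart.1 hx |> mem_singleton.1, comapPart_singleton_apply]
    exact ⟨x, rfl⟩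
  · rintro ⟨x, rfl⟩
    exact ⟨singleton_ne_empty x, e x, comapPart_singleton_apply e x⟩

lemma comapPartition_univ [Fintype β] [Nonempty α] :
    comapPartition e ({univ} : Finset (Finset β)) = {univ} := by
  have : comapPart e (univ : Finset β) = univ := by
    ext x
    simp [mem_comapPart]
  rw [comapPartition, image_singleton, this, erase_eq_of_notMem]
  simpa using univ_nonempty.ne_empty.symm

theorem TwwLE.of_embedding [Fintype β] [Nonempty α] {d : ℕ} (h : TwwLE G d) : TwwLE H d := by
  have key : ∀ QQ, Relation.ReflTransGen (Step G d) (univ.image fun v => {v}) QQ →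
      Relation.ReflTransGen (Step H d) (comapPartition e (univ.image fun v => {v}))
        (comapPartition e QQ) ∧ (QQ : Set (Finset β)).PairwiseDisjoint id := by
    intro QQ hQQ
    induction hQQ with
    | refl => exact ⟨.refl, pairwiseDisjoint_singletons⟩
    | tail _ hS ih => exact ⟨ih.1.trans (hS.comap e ih.2), hS.1.pairwiseDisjoint ih.2⟩
  have := (key _ h).1
  rwa [comapPartition_singletons, comapPartition_univ] at this

end Embedding

section Search
variable {V : Type*} [Fintype V] [DecidableEq V] (G : SimpleGraph V) [DecidableRel G.Adj]

def successors (d : ℕ) (PP : Finset (Finset V)) : Finset (Finset (Finset V)) :=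
  (PP.offDiag.image fun AB => insert (AB.1 ∪ AB.2) ((PP.erase AB.1).erase AB.2)).filter
    (RedDegLE G d)

omit [Fintype V] in
lemma mem_successors {d : ℕ} {PP QQ : Finset (Finset V)} :
    QQ ∈ successors G d PP ↔ Step G d PP QQ := by
  simp only [successors, mem_filter, mem_image, mem_offDiag, Prod.exists, Step, Merge, RedDegLE]
  constructor
  · rintro ⟨⟨A, B, ⟨hA, hB, hAB⟩, rfl⟩, hd⟩
    exact ⟨⟨A, hA, B, hB, hAB, rfl⟩, hd⟩
  · rintro ⟨⟨A, hA, B, hB, hAB, rfl⟩, hd⟩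
    exact ⟨⟨A, B, ⟨hA, hB, hAB⟩, rfl⟩, hd⟩

def reachableWithin (d : ℕ) : ℕ → Finset (Finset (Finset V))
  | 0 => {univ.image fun v => {v}}
  | k + 1 => reachableWithin d k ∪ (reachableWithin d k).biUnion (successors G d)

lemma reflTransGen_of_mem_reachableWithin {d k : ℕ} {PP : Finset (Finset V)}
    (h : PP ∈ reachableWithin G d k) :
    Relation.ReflTransGen (Step G d) (univ.image fun v => {v}) PP := by
  induction k generalizing PP with
  | zero => rw [mem_singleton.1 h]
  | succ k ih =>
    rcases mem_union.1 h with h | h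
    · exact ih h
    · obtain ⟨QQ, hQQ, hPP⟩ := mem_biUnion.1 h
      exact (ih hQQ).tail ((mem_successors G).1 hPP)

lemma twwLE_of_mem_reachableWithin {d k : ℕ} (h : {univ} ∈ reachableWithin G d k) :
    TwwLE G d :=
  reflTransGen_of_mem_reachableWithin G h

lemma discrete_mem_reachableWithin (d k : ℕ) :
    (univ.image fun v => {v}) ∈ reachableWithin G d k := by
  induction k with
  | zero => exact mem_singleton_self _
  | succ k ih => exact mem_union_left _ ih

lemma not_twwLE_of_reachableWithin_closed {d k : ℕ}
    (hclosed : (reachableWithin G d k).biUnion (successors G d) ⊆ reachableWithin G d k)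
    (huniv : {univ} ∉ reachableWithin G d k) : ¬ TwwLE G d := by
  suffices ∀ QQ, Relation.ReflTransGen (Step G d) (univ.image fun v => {v}) QQ →
      QQ ∈ reachableWithin G d k from fun h => huniv (this _ h)
  intro QQ hQQ
  induction hQQ with
  | refl => exact discrete_mem_reachableWithin G d k
  | tail _ hS ih => exact hclosed (mem_biUnion.2 ⟨_, ih, (mem_successors G).2 hS⟩)

end Search

section Grid

instance (m n : ℕ) : DecidableRel (gridGraph m n).Adj := fun p q =>
  inferInstanceAs (Decidable ((p.1 = q.1 ∧ (p.2.val + 1 = q.2.val ∨ q.2.val + 1 = p.2.val)) ∨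
    (p.2 = q.2 ∧ (p.1.val + 1 = q.1.val ∨ q.1.val + 1 = p.1.val))))

def gridGraphEmbedding {m m' n n' : ℕ} (hm : m ≤ m') (hn : n ≤ n') :
    gridGraph m n ↪g gridGraph m' n' where
  toEmbedding := (Fin.castLEEmb hm).prodMap (Fin.castLEEmb hn)
  map_rel_iff' := by
    intro p q
    simp [gridGraph, Fin.ext_iff]

theorem twwLE_gridGraph {m n : ℕ} (hm : 1 ≤ m) (hn : 1 ≤ n) : TwwLE (gridGraph m n) m := by
  refine twwLE_of_bandwidth _ ((Equiv.prodComm _ _).trans finProdFinEquiv) (Nat.mul_pos hn hm) hm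
    fun u v huv => ?_
  simp only [Equiv.trans_apply, Equiv.prodComm_apply, Prod.fst_swap, Prod.snd_swap,
    finProdFinEquiv_apply_val]
  have hu := u.1.isLt
  have hv := v.1.isLt
  obtain ⟨hrow, hcol | hcol⟩ | ⟨hcol, hrow | hrow⟩ := huv
  · rw [← hcol, Nat.mul_succ, hrow]; omega
  · have : m * v.2 ≤ m * u.2 := Nat.mul_le_mul_left m (by omega)
    omega
  all_goals rw [hcol]; omega

set_option maxRecDepth 100000 in
lemma twwLE_gridGraph_two_of_le_three {n : ℕ} (h1 : 1 ≤ n) (h3 : n ≤ 3) :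
    TwwLE (gridGraph 2 n) 1 := by
  interval_cases n
  · exact twwLE_of_mem_reachableWithin _ (k := 1) (by decide)
  · exact twwLE_of_mem_reachableWithin _ (k := 3) (by decide)
  · exact twwLE_of_mem_reachableWithin _ (k := 5) (by decide)

set_option maxRecDepth 100000 in
lemma not_twwLE_gridGraph_two_four : ¬ TwwLE (gridGraph 2 4) 1 :=
  not_twwLE_of_reachableWithin_closed _ (k := 5) (by decide) (by decide)

end Grid

/-- The `2 × n` grid has twin-width `2` iff `n ≥ 4`; moreover it has
twin-width at most `2` for every `n ≥ 2`. -/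
theorem twinWidth_grid_two (n : ℕ) (hn : 1 ≤ n) :
    (tww (gridGraph 2 n) = 2 ↔ 4 ≤ n) ∧ (2 ≤ n → tww (gridGraph 2 n) ≤ 2) := by
  have hle : TwwLE (gridGraph 2 n) 2 := twwLE_gridGraph one_le_two hn
  refine ⟨⟨fun htww => ?_, fun h4 => tww_eq_of_twwLE_of_not_twwLE hle fun h1 => ?_⟩,
    fun _ => tww_le_of_twwLE hle⟩
  · by_contra! h3
    have := tww_le_of_twwLE (twwLE_gridGraph_two_of_le_three hn (by omega))
    omega
  · exact not_twwLE_gridGraph_two_four (h1.of_embedding (gridGraphEmbedding le_rfl h4))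

end TwwPaper
end

section
/- For all positive integers m and n, every subdivision of the m×n grid graph has twin-width at most 4. -/
namespace TwwPaper

open Finset

/-!
Sweep the subdivided grid column by column, and inside a column cell by cell from top to
bottom, where the cell of the grid vertex `(i, j)` consists of the subdivision vertices of the
horizontal edge entering it from the left, the vertex itself, and the subdivision vertices of the
vertical edge leaving it downwards. Each vertex, in this order, is contracted into the part formed
by the already swept vertices of its row; afterwards the rows are merged from top to bottom.
An unswept vertex is red only towards the swept parts of its own and the two neighbouring rows.
A swept row part is red towards the two neighbouring row parts and towards at most two unswept
vertices: the next vertex of its horizontal path, and the next vertex of the vertical path being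
swept (or the grid vertex below its end). Hence all red degrees stay at most `4`.
-/

section Fibers

variable {V X : Type*} {G : SimpleGraph V}

lemma pure_singleton (G : SimpleGraph V) (u v : V) : Pure G {u} {v} := by
  by_cases h : G.Adj u v
  · exact Or.inl (by simpa using h)
  · exact Or.inr (by simpa using h)

lemma redDeg_le_card {PP : Finset (Finset V)} {P : Finset V} (𝒬 : Finset (Finset V))
    (h : ∀ Q ∈ PP, Q ≠ P → ¬ Pure G P Q → Q ∈ 𝒬) : redDeg G PP P ≤ #𝒬 := by
  rw [redDeg, ← Set.ncard_coe_finset]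
  exact Set.ncard_le_ncard (fun Q ⟨hQ, hne, hnp⟩ => h Q hQ hne hnp) (Finset.finite_toSet _)

/-- The partition labelled by `f'` arises from the one labelled by `f` by merging the parts of
`a` and `b`. -/
def MergesFibers (f : V → X) (f' : V → X) (a b : V) : Prop :=
  ∀ v w, f' v = f' w ↔ f v = f w ∨ (f v = f a ∨ f v = f b) ∧ (f w = f a ∨ f w = f b)

lemma mergesFibers_self (f : V → X) (a : V) : MergesFibers f f a a := by
  intro v w
  grind

variable [Fintype V] [DecidableEq X]

-- Partitions of `V` are handled as the families of fibres of labellings `f : V → X`.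
def fiber (f : V → X) (v : V) : Finset V := {w | f w = f v}

@[simp] lemma mem_fiber {f : V → X} {v w : V} : w ∈ fiber f v ↔ f w = f v := by simp [fiber]

lemma fiber_eq_fiber_iff {f : V → X} {v w : V} : fiber f w = fiber f v ↔ f w = f v :=
  ⟨fun h => mem_fiber.mp (h ▸ mem_fiber.mpr rfl), fun h => by ext; simp [h]⟩

variable [DecidableEq V]

lemma redDeg_image_fiber_le (f : V → X) {P : Finset V} (𝒬 : Finset (Finset V))
    (h : ∀ x ∈ P, ∀ y, G.Adj x y → fiber f y ≠ P → ¬ Pure G P (fiber f y) →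
      fiber f y ∈ 𝒬) :
    redDeg G (univ.image (fiber f)) P ≤ #𝒬 := by
  refine redDeg_le_card 𝒬 fun Q hQ hne hnp => ?_
  obtain ⟨w, -, rfl⟩ := mem_image.mp hQ
  obtain ⟨x, hx, y, hy, hxy⟩ : ∃ x ∈ P, ∃ y ∈ fiber f w, G.Adj x y := by
    simp only [Pure, not_or, not_forall] at hnp
    obtain ⟨-, x, hx, y, hy, hxy⟩ := hnp
    exact ⟨x, hx, y, hy, not_not.mp hxy⟩
  rw [← fiber_eq_fiber_iff.mpr (mem_fiber.mp hy)] at hne hnp ⊢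
  exact h x hx y hxy hne hnp

lemma MergesFibers.merge_image {f f' : V → X} {a b : V} (h : MergesFibers f f' a b)
    (hab : f a ≠ f b) : Merge (univ.image (fiber f)) (univ.image (fiber f')) := by
  have hfiber : ∀ w, fiber f' w =
      if f w = f a ∨ f w = f b then fiber f a ∪ fiber f b else fiber f w := by
    intro w
    ext x
    split_ifs with hw <;> simp only [mem_fiber, mem_union, h x w] <;> grind
  refine ⟨fiber f a, mem_image_of_mem _ (mem_univ a), fiber f b, mem_image_of_mem _ (mem_univ b),
    fun h => hab (fiber_eq_fiber_iff.mp h), ?_⟩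
  ext P
  simp only [mem_image, mem_univ, true_and, mem_insert, mem_erase, hfiber]
  constructor
  · rintro ⟨w, rfl⟩
    split_ifs with hw
    · exact Or.inl rfl
    · simp only [not_or, ← fiber_eq_fiber_iff (f := f)] at hw
      exact Or.inr ⟨hw.2, hw.1, w, rfl⟩
  · rintro (rfl | ⟨hb, ha, w, rfl⟩)
    · exact ⟨a, by simp⟩
    · refine ⟨w, ?_⟩
      rw [if_neg (by simp only [← fiber_eq_fiber_iff (f := f)]; tauto)]

lemma reflTransGen_step_image_fiber {d N : ℕ} (f : ℕ → V → X)
    (hmerge : ∀ k < N, ∃ a b, MergesFibers (f k) (f (k + 1)) a b)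
    (hred : ∀ k ≤ N, ∀ v, redDeg G (univ.image (fiber (f k))) (fiber (f k) v) ≤ d) :
    Relation.ReflTransGen (Step G d) (univ.image (fiber (f 0))) (univ.image (fiber (f N))) := by
  induction N with
  | zero => rfl
  | succ N ih =>
    refine (ih (fun k hk => hmerge k (by omega)) (fun k hk => hred k (by omega))).trans ?_
    obtain ⟨a, b, h⟩ := hmerge N (by omega)
    by_cases hab : f N a = f N b
    · have : fiber (f (N + 1)) = fiber (f N) := by
        ext v w
        simp only [mem_fiber, h w v]
        grind
      rw [this]
    · refine .single ⟨h.merge_image hab, fun P hP => ?_⟩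
      obtain ⟨v, -, rfl⟩ := mem_image.mp hP
      exact hred _ le_rfl v

end Fibers

section RowSweep

variable {V : Type*} (G : SimpleGraph V) (ρ ord : V → ℕ)

-- The fibres of `sweepLabel ρ ord t` are the parts after `t` steps of the sweep.
def sweepLabel (t : ℕ) (v : V) : V ⊕ ℕ := if t ≤ ord v then .inl v else .inr (ρ v)

def rowLabel (s : ℕ) (v : V) : ℕ := max s (ρ v)

open Classical in
noncomputable def frontier [Fintype V] (t i : ℕ) : Finset V :=
  {y | t ≤ ord y ∧ ∃ x, ρ x = i ∧ ord x < t ∧ G.Adj x y}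

variable {G ρ ord}

lemma sweepLabel_succ_of_forall_ne {t : ℕ} (h : ∀ v, ord v ≠ t) :
    sweepLabel ρ ord (t + 1) = sweepLabel ρ ord t := by
  ext v
  simp only [sweepLabel]
  grind

lemma mergesFibers_sweepLabel_succ (hord : Function.Injective ord) {t : ℕ} {v u : V}
    (hv : ord v = t) (hu : ρ u = ρ v) (hut : ord u < t) :
    MergesFibers (sweepLabel ρ ord t) (sweepLabel ρ ord (t + 1)) v u := by
  have h (x : V) : ord x = t ↔ x = v := ⟨fun h => hord (h.trans hv.symm), fun h => h ▸ hv⟩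
  intro x y
  simp only [sweepLabel]
  grind

lemma mergesFibers_sweepLabel_succ_self (hord : Function.Injective ord) {t : ℕ} {v : V}
    (hv : ord v = t) (hrow : ∀ u, ρ u = ρ v → t ≤ ord u) :
    MergesFibers (sweepLabel ρ ord t) (sweepLabel ρ ord (t + 1)) v v := by
  have h (x : V) : ord x = t ↔ x = v := ⟨fun h => hord (h.trans hv.symm), fun h => h ▸ hv⟩
  intro x y
  simp only [sweepLabel]
  grind

lemma exists_mergesFibers_sweepLabel [Nonempty V] (hord : Function.Injective ord) (t : ℕ) :
    ∃ a b, MergesFibers (sweepLabel ρ ord t) (sweepLabel ρ ord (t + 1)) a b := by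
  by_cases hv : ∃ v, ord v = t
  · obtain ⟨v, hv⟩ := hv
    by_cases hu : ∃ u, ρ u = ρ v ∧ ord u < t
    · obtain ⟨u, hu, hut⟩ := hu
      exact ⟨v, u, mergesFibers_sweepLabel_succ hord hv hu hut⟩
    · push Not at hu
      exact ⟨v, v, mergesFibers_sweepLabel_succ_self hord hv hu⟩
  · push Not at hv
    obtain ⟨a⟩ := ‹Nonempty V›
    exact ⟨a, a, sweepLabel_succ_of_forall_ne hv ▸ mergesFibers_self _ a⟩

lemma exists_mergesFibers_rowLabel [Nonempty V] (s : ℕ) :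
    ∃ a b, MergesFibers (rowLabel ρ s) (rowLabel ρ (s + 1)) a b := by
  by_cases h : ∃ a b, ρ a ≤ s ∧ ρ b = s + 1
  · obtain ⟨a, b, ha, hb⟩ := h
    refine ⟨a, b, fun x y => ?_⟩
    simp only [rowLabel]
    omega
  · push Not at h
    obtain ⟨a⟩ := ‹Nonempty V›
    refine ⟨a, a, fun x y => ?_⟩
    simp only [rowLabel]
    grind

variable [Fintype V]

lemma fiber_rowLabel (s : ℕ) (v : V) : fiber (rowLabel ρ s) v =
    if ρ v ≤ s then ({w | ρ w ≤ s} : Finset V) else ({w | ρ w = ρ v} : Finset V) := by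
  ext w
  rw [mem_fiber]
  unfold rowLabel
  split_ifs <;> simp only [mem_filter, mem_univ, true_and] <;> omega

variable [DecidableEq V]

lemma fiber_sweepLabel (t : ℕ) (v : V) : fiber (sweepLabel ρ ord t) v =
    if t ≤ ord v then {v} else ({w | ρ w = ρ v ∧ ord w < t} : Finset V) := by
  ext w
  rw [mem_fiber]
  unfold sweepLabel
  split_ifs <;> simp only [mem_singleton, mem_filter, mem_univ, true_and] <;> grind

lemma redDeg_sweepLabel_le_of_le (hρ : ∀ x y, G.Adj x y → ρ y ≤ ρ x + 1) {t : ℕ} {v : V}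
    (hv : t ≤ ord v) :
    redDeg G (univ.image (fiber (sweepLabel ρ ord t))) (fiber (sweepLabel ρ ord t) v) ≤ 3 := by
  set swept : ℕ → Finset V := fun i => {w | ρ w = i ∧ ord w < t}
  have hfib (y : V) : fiber (sweepLabel ρ ord t) y = if t ≤ ord y then {y} else swept (ρ y) :=
    fiber_sweepLabel t y
  calc _ ≤ #{swept (ρ v - 1), swept (ρ v), swept (ρ v + 1)} := by
        refine redDeg_image_fiber_le _ _ fun x hx y hxy _ hnp => ?_
        rw [hfib v, if_pos hv, mem_singleton] at hx
        subst hx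
        rw [hfib x, if_pos hv, hfib y] at hnp
        rw [hfib y]
        split_ifs at hnp ⊢ with hy
        · exact absurd (pure_singleton G x y) hnp
        · have := hρ x y hxy
          have := hρ y x hxy.symm
          simp only [mem_insert, mem_singleton]
          rcases (by omega : ρ y = ρ x - 1 ∨ ρ y = ρ x ∨ ρ y = ρ x + 1) with h | h | h <;>
            simp [h]
    _ ≤ 3 := card_le_three

lemma redDeg_sweepLabel_le_of_lt (hρ : ∀ x y, G.Adj x y → ρ y ≤ ρ x + 1) {t : ℕ}
    (hfront : ∀ i, #(frontier G ρ ord t i) ≤ 2) {v : V} (hv : ord v < t) :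
    redDeg G (univ.image (fiber (sweepLabel ρ ord t))) (fiber (sweepLabel ρ ord t) v) ≤ 4 := by
  set swept : ℕ → Finset V := fun i => {w | ρ w = i ∧ ord w < t} with hswept
  have hfib (y : V) : fiber (sweepLabel ρ ord t) y = if t ≤ ord y then {y} else swept (ρ y) :=
    fiber_sweepLabel t y
  calc _ ≤ #({swept (ρ v - 1), swept (ρ v + 1)} ∪
        (frontier G ρ ord t (ρ v)).image ({·})) := by
        refine redDeg_image_fiber_le _ _ fun x hx y hxy hne _ => ?_
        rw [hfib v, if_neg hv.not_ge] at hx hne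
        obtain ⟨hxv, hxt⟩ : ρ x = ρ v ∧ ord x < t := by simpa [hswept] using hx
        rw [hfib y] at hne ⊢
        split_ifs at hne ⊢ with hy
        · refine mem_union_right _ (mem_image_of_mem _ ?_)
          simp only [frontier, mem_filter, mem_univ, true_and]
          exact ⟨hy, x, hxv, hxt, hxy⟩
        · have := hρ x y hxy
          have := hρ y x hxy.symm
          have : ρ y ≠ ρ v := fun h => hne (by rw [h])
          refine mem_union_left _ ?_
          simp only [mem_insert, mem_singleton]
          rcases (by omega : ρ y = ρ v - 1 ∨ ρ y = ρ v + 1) with h | h <;> simp [h]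
    _ ≤ 2 + 2 :=
      (card_union_le _ _).trans (add_le_add card_le_two (card_image_le.trans (hfront _)))

lemma redDeg_rowLabel_le (hρ : ∀ x y, G.Adj x y → ρ y ≤ ρ x + 1) (s : ℕ) (v : V) :
    redDeg G (univ.image (fiber (rowLabel ρ s))) (fiber (rowLabel ρ s) v) ≤ 3 := by
  set lower : Finset V := {w | ρ w ≤ s}
  set row : ℕ → Finset V := fun i => {w | ρ w = i}
  have hfib (y : V) : fiber (rowLabel ρ s) y = if ρ y ≤ s then lower else row (ρ y) :=
    fiber_rowLabel s y
  by_cases hv : ρ v ≤ s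
  · calc _ ≤ #{row (s + 1)} := by
          refine redDeg_image_fiber_le _ _ fun x hx y hxy hne _ => ?_
          rw [hfib v, if_pos hv] at hx hne
          rw [hfib y] at hne ⊢
          have := hρ x y hxy
          have : ρ x ≤ s := by simpa [lower] using hx
          split_ifs at hne ⊢ with hy
          · exact absurd rfl hne
          · rw [mem_singleton, (by omega : ρ y = s + 1)]
      _ ≤ 3 := by simp
  · calc _ ≤ #{lower, row (ρ v - 1), row (ρ v + 1)} := by
          refine redDeg_image_fiber_le _ _ fun x hx y hxy hne _ => ?_
          rw [hfib v, if_neg hv] at hx hne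
          rw [hfib y] at hne ⊢
          have := hρ x y hxy
          have := hρ y x hxy.symm
          have : ρ x = ρ v := by simpa [row] using hx
          simp only [mem_insert, mem_singleton]
          split_ifs at hne ⊢ with hy
          · exact Or.inl rfl
          · have : ρ y ≠ ρ v := fun h => hne (by rw [h])
            rcases (by omega : ρ y = ρ v - 1 ∨ ρ y = ρ v + 1) with h | h <;> simp [h]
      _ ≤ 3 := card_le_three

theorem twwLE_four_of_rowSweep [Nonempty V] (hord : Function.Injective ord)
    (hρ : ∀ x y, G.Adj x y → ρ y ≤ ρ x + 1)
    (hfront : ∀ t i, #(frontier G ρ ord t i) ≤ 2) :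
    TwwLE G 4 := by
  obtain ⟨T, hT⟩ : ∃ T, ∀ v, ord v < T :=
    ⟨univ.sup ord + 1, fun v => Nat.lt_succ_of_le (le_sup (mem_univ v))⟩
  obtain ⟨S, hS⟩ : ∃ S, ∀ v, ρ v ≤ S := ⟨univ.sup ρ, fun v => le_sup (mem_univ v)⟩
  have sweep := reflTransGen_step_image_fiber (G := G) (N := T) (sweepLabel ρ ord)
    (fun t _ => exists_mergesFibers_sweepLabel hord t)
    (fun t _ v => (le_or_gt t (ord v)).elim
      (fun hv => (redDeg_sweepLabel_le_of_le hρ hv).trans (by norm_num))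
      (redDeg_sweepLabel_le_of_lt hρ (hfront t)))
  have merge := reflTransGen_step_image_fiber (G := G) (d := 4) (N := S) (rowLabel ρ)
    (fun s _ => exists_mergesFibers_rowLabel s)
    (fun s _ v => (redDeg_rowLabel_le hρ s v).trans (by norm_num))
  have hstart : fiber (sweepLabel ρ ord 0) = fun v => {v} := by
    ext v : 1
    simp [fiber_sweepLabel]
  have hswitch : fiber (sweepLabel ρ ord T) = fiber (rowLabel ρ 0) := by
    ext v w
    simp [sweepLabel, rowLabel, (hT _).not_ge]
  have hend : fiber (rowLabel ρ S) = fun _ => univ := by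
    ext v : 1
    simp [fiber_rowLabel, hS]
  rw [hstart, hswitch] at sweep
  rw [hend, image_const univ_nonempty] at merge
  exact sweep.trans merge

end RowSweep

lemma card_filter_lt_lt_iff {V α : Type*} [Fintype V] [LinearOrder α] (f : V → α) {x y : V} :
    #{w | f w < f x} < #{w | f w < f y} ↔ f x < f y := by
  constructor
  · intro h
    by_contra hle
    refine h.not_ge (card_le_card fun w => ?_)
    simp only [mem_filter, mem_univ, true_and]
    exact fun hw => hw.trans_le (not_lt.mp hle)
  · intro h
    refine card_lt_card ((ssubset_iff_of_subset fun w => ?_).mpr ⟨x, ?_⟩)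
    · simp only [mem_filter, mem_univ, true_and]
      exact fun hw => hw.trans h
    · simpa using h

section Layout

variable {V : Type*} {m n : ℕ}

def IsLayoutStep (cell : V → Fin m × Fin n) (pos : V → ℕ)
    (hLen vLen : Fin m × Fin n → ℕ) (x y : V) : Prop :=
  (cell y = cell x ∧ pos y = pos x + 1) ∨
  ((cell y).1 = (cell x).1 ∧ (cell y).2.val = (cell x).2.val + 1 ∧
    pos x = hLen (cell x) ∧ pos y = 0) ∨
  ((cell y).2 = (cell x).2 ∧ (cell y).1.val = (cell x).1.val + 1 ∧
    pos x = hLen (cell x) + vLen (cell x) ∧ pos y = hLen (cell y))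

/-- A layout of `G` along an `m × n` grid of cells: cell `c` holds the positions
`0, …, hLen c + vLen c`, those `≤ hLen c` forming its part of a horizontal track. Every edge is
an `IsLayoutStep`: to the next position of the same cell, from track position `hLen c` to
position `0` of the cell to the right, or from the last position of `c` to track position `hLen`
of the cell below. For a subdivided grid, position `hLen c` of cell `c` is the grid vertex `c`. -/
structure GridLayout (G : SimpleGraph V) (m n : ℕ) where
  cell : V → Fin m × Fin n
  pos : V → ℕ
  hLen : Fin m × Fin n → ℕ
  vLen : Fin m × Fin n → ℕ
  injective : Function.Injective fun v => (cell v, pos v)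
  pos_le : ∀ v, pos v ≤ hLen (cell v) + vLen (cell v)
  adj : ∀ x y, G.Adj x y →
    IsLayoutStep cell pos hLen vLen x y ∨ IsLayoutStep cell pos hLen vLen y x

namespace GridLayout

variable {G : SimpleGraph V} (L : GridLayout G m n)

abbrev IsStep (x y : V) : Prop := IsLayoutStep L.cell L.pos L.hLen L.vLen x y

def row (v : V) : ℕ := (L.cell v).1

def col (v : V) : ℕ := (L.cell v).2

def ord [Fintype V] (v : V) : ℕ :=
  #{w | toLex (L.col w, toLex (L.row w, L.pos w)) < toLex (L.col v, toLex (L.row v, L.pos v))}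

variable {L} in
lemma row_le_of_adj {x y : V} (h : G.Adj x y) : L.row y ≤ L.row x + 1 := by
  unfold row
  rcases L.adj x y h with h | h <;> unfold IsLayoutStep at h <;> grind

variable [Fintype V] {L}

lemma ord_lt_ord_iff {x y : V} : L.ord x < L.ord y ↔
    L.col x < L.col y ∨ L.col x = L.col y ∧ (L.row x < L.row y ∨
      L.row x = L.row y ∧ L.pos x < L.pos y) := by
  rw [ord, ord, card_filter_lt_lt_iff (fun v => toLex (L.col v, toLex (L.row v, L.pos v))),
    Prod.Lex.toLex_lt_toLex, Prod.Lex.toLex_lt_toLex]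

lemma ord_injective : Function.Injective L.ord := by
  intro x y h
  apply L.injective
  have h1 := (ord_lt_ord_iff (L := L) (x := x) (y := y)).not.mp h.not_lt
  have h2 := (ord_lt_ord_iff (L := L) (x := y) (y := x)).not.mp h.symm.not_lt
  simp only [row, col] at h1 h2
  simp only [Prod.ext_iff, Fin.ext_iff]
  omega

lemma IsStep.ord_lt {x y : V} (h : L.IsStep x y) :
    L.ord x < L.ord y := by
  rw [ord_lt_ord_iff]
  simp only [row, col]
  rcases h with ⟨hc, hp⟩ | ⟨hr, hc, -, -⟩ | ⟨hc, hr, -, -⟩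
  · rw [hc]; omega
  · omega
  · rw [hc]; omega

lemma IsStep.eq_of_interleaved {x y x' y' : V} (h : L.IsStep x y)
    (h' : L.IsStep x' y') (hrow : L.row x = L.row x')
    (h1 : L.ord x < L.ord y') (h2 : L.ord x' < L.ord y)
    (hkind : (L.row y = L.row x ∧ L.pos y ≤ L.hLen (L.cell y)) ↔
      (L.row y' = L.row x ∧ L.pos y' ≤ L.hLen (L.cell y'))) : y = y' := by
  -- The interleaving puts `x` and `x'` in the same cell. Steps of different types then either
  -- reach vertices of different kinds, or (a step inside the cell against a step down from its
  -- last position) contradict the interleaving.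
  rw [ord_lt_ord_iff] at h1 h2
  have := L.pos_le y
  have := L.pos_le y'
  apply L.injective
  simp only [row, col] at *
  unfold IsStep IsLayoutStep at h h'
  simp only [Prod.ext_iff, Fin.ext_iff] at *
  grind

lemma card_frontier_le_two (t i : ℕ) : #(frontier G L.row L.ord t i) ≤ 2 := by
  let kind : V → Bool := fun y => decide (L.row y = i ∧ L.pos y ≤ L.hLen (L.cell y))
  have step {x y : V} (hxy : G.Adj x y) (h : L.ord x < L.ord y) :
      L.IsStep x y :=
    (L.adj x y hxy).resolve_right fun h' => lt_asymm h (IsStep.ord_lt h')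
  refine (card_le_card_of_injOn kind (fun _ _ => mem_coe.mpr (mem_univ _)) ?_).trans_eq
    (card_univ.trans Fintype.card_bool)
  intro y hy y' hy' hkind
  simp only [frontier, mem_coe, mem_filter, mem_univ, true_and] at hy hy'
  obtain ⟨hty, x, rfl, hxt, hxy⟩ := hy
  obtain ⟨hty', x', hx', hxt', hxy'⟩ := hy'
  exact IsStep.eq_of_interleaved (step hxy (by omega)) (step hxy' (by omega)) hx'.symm (by omega)
    (by omega) (by simpa only [hx'] using decide_eq_decide.mp hkind)

theorem twwLE_four [DecidableEq V] [Nonempty V] (L : GridLayout G m n) : TwwLE G 4 :=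
  twwLE_four_of_rowSweep ord_injective (fun _ _ h => L.row_le_of_adj h) L.card_frontier_le_two

def comap {W : Type*} {H : SimpleGraph W} (L : GridLayout G m n) (e : H ≃g G) :
    GridLayout H m n where
  cell := L.cell ∘ e
  pos := L.pos ∘ e
  hLen := L.hLen
  vLen := L.vLen
  injective := L.injective.comp e.injective
  pos_le v := L.pos_le (e v)
  adj x y h := L.adj (e x) (e y) (e.map_adj_iff.mpr h)

end GridLayout

end Layout

section GridSubdivision

variable {m n : ℕ} (ℓ : Fin m × Fin n → Fin m × Fin n → ℕ)

abbrev GridEdge (m n : ℕ) :=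
  {p : (Fin m × Fin n) × (Fin m × Fin n) //
    @LT.lt _ lexLT p.1 p.2 ∧ (gridGraph m n).Adj p.1 p.2}

abbrev GridSubdivVert := @SubdivVert (Fin m × Fin n) lexLT (gridGraph m n) ℓ

abbrev gridSubdiv := @Subdiv (Fin m × Fin n) lexLT (gridGraph m n) ℓ

lemma gridGraph_adj_of_lexLT {a b : Fin m × Fin n} (hab : @LT.lt _ lexLT a b)
    (h : (gridGraph m n).Adj a b) :
    (a.1 = b.1 ∧ a.2.val + 1 = b.2.val) ∨ (a.2 = b.2 ∧ a.1.val + 1 = b.1.val) := by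
  change a.1 < b.1 ∨ (a.1 = b.1 ∧ a.2 < b.2) at hab
  simp only [gridGraph, Fin.lt_def, Fin.ext_iff] at h hab ⊢
  omega

def leftLen (p : Fin m × Fin n) : ℕ :=
  if h : 0 < p.2.val then ℓ (p.1, ⟨p.2.val - 1, by omega⟩) p else 0

def downLen (p : Fin m × Fin n) : ℕ :=
  if h : p.1.val + 1 < m then ℓ p (⟨p.1.val + 1, h⟩, p.2) else 0

lemma leftLen_eq {a b : Fin m × Fin n} (h1 : a.1 = b.1) (h2 : a.2.val + 1 = b.2.val) :
    leftLen ℓ b = ℓ a b := by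
  rw [leftLen, dif_pos (by omega)]
  congr 1
  exact Prod.ext h1.symm (Fin.ext (by simp only; omega))

lemma downLen_eq {a b : Fin m × Fin n} (h1 : a.2 = b.2) (h2 : a.1.val + 1 = b.1.val) :
    downLen ℓ a = ℓ a b := by
  rw [downLen, dif_pos (by omega)]
  congr 1
  exact Prod.ext (Fin.ext (by simp only; omega)) h1

-- An edge `e` is horizontal iff `e.1.1.1 = e.1.2.1`. Its subdivision vertices lie in the cell
-- of its right end if it is horizontal and of its upper end if it is vertical.
def subdivCell : GridSubdivVert ℓ → Fin m × Fin n
  | .inl p => p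
  | .inr ⟨e, _⟩ => if e.1.1.1 = e.1.2.1 then e.1.2 else e.1.1

def subdivPos : GridSubdivVert ℓ → ℕ
  | .inl p => leftLen ℓ p
  | .inr ⟨e, q⟩ => if e.1.1.1 = e.1.2.1 then q else leftLen ℓ e.1.1 + 1 + q

abbrev subdivStep (x y : GridSubdivVert ℓ) : Prop :=
  IsLayoutStep (subdivCell ℓ) (subdivPos ℓ) (leftLen ℓ) (downLen ℓ) x y

variable {ℓ}

lemma GridEdge.eq_of_horizontal {e e' : GridEdge m n} (h : e.1.1.1 = e.1.2.1)
    (h' : e'.1.1.1 = e'.1.2.1) (hsnd : e.1.2 = e'.1.2) : e = e' := by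
  have := gridGraph_adj_of_lexLT e.2.1 e.2.2
  have := gridGraph_adj_of_lexLT e'.2.1 e'.2.2
  simp only [Subtype.ext_iff, Prod.ext_iff, Fin.ext_iff] at *
  omega

lemma GridEdge.eq_of_vertical {e e' : GridEdge m n} (h : e.1.1.1 ≠ e.1.2.1)
    (h' : e'.1.1.1 ≠ e'.1.2.1) (hfst : e.1.1 = e'.1.1) : e = e' := by
  have := gridGraph_adj_of_lexLT e.2.1 e.2.2
  have := gridGraph_adj_of_lexLT e'.2.1 e'.2.2
  simp only [Subtype.ext_iff, Prod.ext_iff, Fin.ext_iff] at *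
  omega

lemma GridEdge.leftLen_snd {e : GridEdge m n} (h : e.1.1.1 = e.1.2.1) :
    leftLen ℓ e.1.2 = ℓ e.1.1 e.1.2 := by
  refine leftLen_eq ℓ h ?_
  have := gridGraph_adj_of_lexLT e.2.1 e.2.2
  rw [Fin.ext_iff] at h
  omega

lemma GridEdge.downLen_fst {e : GridEdge m n} (h : e.1.1.1 ≠ e.1.2.1) :
    downLen ℓ e.1.1 = ℓ e.1.1 e.1.2 := by
  refine downLen_eq ℓ ?_ ?_ <;> have := gridGraph_adj_of_lexLT e.2.1 e.2.2 <;> grind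

lemma subdivPos_le (v : GridSubdivVert ℓ) :
    subdivPos ℓ v ≤ leftLen ℓ (subdivCell ℓ v) + downLen ℓ (subdivCell ℓ v) := by
  rcases v with p | ⟨e, q⟩
  · simp [subdivPos, subdivCell]
  · have hq := q.isLt
    by_cases h1 : e.1.1.1 = e.1.2.1
    · simp only [subdivPos, subdivCell, if_pos h1, GridEdge.leftLen_snd h1]
      omega
    · simp only [subdivPos, subdivCell, if_neg h1, GridEdge.downLen_fst h1]
      omega

lemma subdivCellPos_inl_ne_inr (a : Fin m × Fin n) (e : GridEdge m n) (q : Fin (ℓ e.1.1 e.1.2)) :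
    (subdivCell ℓ (Sum.inl a), subdivPos ℓ (Sum.inl a)) ≠
      (subdivCell ℓ (Sum.inr ⟨e, q⟩), subdivPos ℓ (Sum.inr ⟨e, q⟩)) := by
  have hq := q.isLt
  intro h
  simp only [subdivCell, subdivPos, Prod.mk.injEq] at h
  by_cases h1 : e.1.1.1 = e.1.2.1
  · rw [if_pos h1, if_pos h1] at h
    obtain ⟨rfl, h⟩ := h
    rw [GridEdge.leftLen_snd h1] at h
    omega
  · rw [if_neg h1, if_neg h1] at h
    obtain ⟨rfl, h⟩ := h
    omega

lemma subdivCellPos_injective :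
    Function.Injective fun v : GridSubdivVert ℓ => (subdivCell ℓ v, subdivPos ℓ v) := by
  rintro (a | ⟨e, q⟩) (b | ⟨e', q'⟩) h
  · exact congrArg Sum.inl (Prod.mk.inj h).1
  · exact absurd h (subdivCellPos_inl_ne_inr a e' q')
  · exact absurd h.symm (subdivCellPos_inl_ne_inr b e q)
  · simp only [subdivCell, subdivPos, Prod.mk.injEq] at h
    have hq := q.isLt
    have hq' := q'.isLt
    by_cases h1 : e.1.1.1 = e.1.2.1 <;> by_cases h1' : e'.1.1.1 = e'.1.2.1
    · simp only [if_pos h1, if_pos h1'] at h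
      obtain rfl := GridEdge.eq_of_horizontal h1 h1' h.1
      obtain rfl : q = q' := Fin.ext h.2
      rfl
    · simp only [if_pos h1, if_neg h1'] at h
      have := (GridEdge.leftLen_snd h1).symm.trans (congrArg (leftLen ℓ) h.1)
      omega
    · simp only [if_neg h1, if_pos h1'] at h
      have := (GridEdge.leftLen_snd h1').symm.trans (congrArg (leftLen ℓ) h.1.symm)
      omega
    · simp only [if_neg h1, if_neg h1'] at h
      obtain rfl := GridEdge.eq_of_vertical h1 h1' h.1
      obtain rfl : q = q' := Fin.ext (by omega)
      rfl

lemma isLayoutStep_inl_inl {a b : Fin m × Fin n} (hab : @LT.lt _ lexLT a b)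
    (hadj : (gridGraph m n).Adj a b) (hℓ : ℓ a b = 0) :
    subdivStep ℓ (Sum.inl a) (Sum.inl b) := by
  simp only [subdivStep, IsLayoutStep, subdivCell, subdivPos]
  rcases gridGraph_adj_of_lexLT hab hadj with ⟨h1, h2⟩ | ⟨h1, h2⟩
  · have := leftLen_eq ℓ h1 h2
    grind
  · have := downLen_eq ℓ h1 h2
    grind

lemma isLayoutStep_of_adj_inl_inr {a : Fin m × Fin n} {e : GridEdge m n}
    {q : Fin (ℓ e.1.1 e.1.2)} (h : (gridSubdiv ℓ).Adj (Sum.inl a) (Sum.inr ⟨e, q⟩)) :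
    subdivStep ℓ (Sum.inl a) (Sum.inr ⟨e, q⟩) ∨
      subdivStep ℓ (Sum.inr ⟨e, q⟩) (Sum.inl a) := by
  have he := gridGraph_adj_of_lexLT e.2.1 e.2.2
  simp only [subdivStep, IsLayoutStep, subdivCell, subdivPos]
  by_cases h1 : e.1.1.1 = e.1.2.1
  · have := GridEdge.leftLen_snd (ℓ := ℓ) h1
    simp only [if_pos h1]
    rcases h with ⟨rfl, hq⟩ | ⟨rfl, hq⟩ <;> grind
  · have := GridEdge.downLen_fst (ℓ := ℓ) h1
    simp only [if_neg h1]
    rcases h with ⟨rfl, hq⟩ | ⟨rfl, hq⟩ <;> grind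

lemma isLayoutStep_of_adj (x y : GridSubdivVert ℓ) (h : (gridSubdiv ℓ).Adj x y) :
    subdivStep ℓ x y ∨ subdivStep ℓ y x := by
  rcases x with a | ⟨e, q⟩ <;> rcases y with b | ⟨e', q'⟩
  · rcases h with ⟨hadj, ⟨hab, hℓ⟩ | ⟨hba, hℓ⟩⟩
    · exact Or.inl (isLayoutStep_inl_inl hab hadj hℓ)
    · exact Or.inr (isLayoutStep_inl_inl hba hadj.symm hℓ)
  · exact isLayoutStep_of_adj_inl_inr h
  · exact (isLayoutStep_of_adj_inl_inr h.symm).symm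
  · obtain ⟨he, hq⟩ := h
    dsimp only at he hq
    subst he
    simp only [subdivStep, IsLayoutStep, subdivCell, subdivPos, true_and]
    split_ifs <;> omega

variable (ℓ) in
def gridSubdivLayout : GridLayout (gridSubdiv ℓ) m n where
  cell := subdivCell ℓ
  pos := subdivPos ℓ
  hLen := leftLen ℓ
  vLen := downLen ℓ
  injective := subdivCellPos_injective
  pos_le := subdivPos_le
  adj := isLayoutStep_of_adj

end GridSubdivision

/-- Every subdivision of the `m × n` grid has twin-width at most `4`. -/
theorem twinWidth_grid_subdivision (m n : ℕ) (hm : 1 ≤ m) (hn : 1 ≤ n)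
    {β : Type*} [Fintype β] [DecidableEq β] (H : SimpleGraph β)
    (ℓ : Fin m × Fin n → Fin m × Fin n → ℕ)
    (hiso : Nonempty (H ≃g @Subdiv _ lexLT (gridGraph m n) ℓ)) :
    tww H ≤ 4 := by
  obtain ⟨e⟩ := hiso
  have : Nonempty β := ⟨e.symm (Sum.inl (⟨0, hm⟩, ⟨0, hn⟩))⟩
  exact Nat.sInf_le ((gridSubdivLayout ℓ).comap e).twwLE_four

end TwwPaper
end
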